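/- Let k be a field and n ≥ m+2 ≥ 3. Set J = (x_{m+3},…,x_n) ⊆ k[x_0,…,x_n] and let I_{X_0} = (x_1,…,x_{m+1})·(x_{m+1},x_{m+2}) + J (the ideal of the (m+2)-dimensional sundial) and I_H = (x_{m+1}) + J (the ideal of the linear span H of the line and the m-plane composing the sundial). Then the colon ideal satisfies I_{X_0} : I_H = (x_1,…,x_n), i.e., the residual scheme Res_H(X_0) is the single reduced point [1:0:⋯:0]. -/

import Mathlib

/-!
Let `φ` set every variable except `x₀` and `x_{m+1}` to zero. It maps the sundial ideal into
`(x_{m+1}²)`, so if `f · x_{m+1}` lies in the sundial ideal then `x_{m+1}` divides `φ f`; as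
`f - φ f` lies in the ideal of the variables killed by `φ`, this gives `f ∈ (x₁, …, xₙ)`.
Conversely `x_i · x_{m+1}` lies in the sundial ideal for every `i ≥ 1` (for `i = m + 2` because
`x_{m+1} ∈ (x₁, …, x_{m+1})` and `x_{m+2} ∈ (x_{m+1}, x_{m+2})`), and so does `J`.
-/

open MvPolynomial

namespace MvPolynomial

variable {σ R : Type*} [CommRing R]

open Classical in
noncomputable def zeroOutside (s : Set σ) : MvPolynomial σ R →ₐ[R] MvPolynomial σ R :=
  aeval fun i => if i ∈ s then X i else 0

@[simp]
lemma zeroOutside_X_of_mem {s : Set σ} {i : σ} (hi : i ∈ s) :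
    zeroOutside s (X i : MvPolynomial σ R) = X i := by
  simp [zeroOutside, hi]

@[simp]
lemma zeroOutside_X_of_notMem {s : Set σ} {i : σ} (hi : i ∉ s) :
    zeroOutside s (X i : MvPolynomial σ R) = 0 := by
  simp [zeroOutside, hi]

lemma X_mem_span_X_image {s : Set σ} {i : σ} (hi : i ∈ s) :
    (X i : MvPolynomial σ R) ∈ Ideal.span (X '' s) :=
  Ideal.subset_span ⟨i, hi, rfl⟩

lemma sub_zeroOutside_mem_span_X_compl (s : Set σ) (p : MvPolynomial σ R) :
    p - zeroOutside s p ∈ Ideal.span (X '' sᶜ) := by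
  rw [← Ideal.Quotient.eq, ← Ideal.Quotient.mkₐ_eq_mk R, ← AlgHom.comp_apply]
  congr 1
  refine (algHom_ext fun i => ?_).symm
  rw [AlgHom.comp_apply, Ideal.Quotient.mkₐ_eq_mk, Ideal.Quotient.eq]
  by_cases hi : i ∈ s
  · simp [hi]
  · simpa [hi] using X_mem_span_X_image (R := R) hi

lemma span_X_image_le_comap_zeroOutside {s t u : Set σ} (h : s ∩ t ⊆ u) :
    Ideal.span (X '' t) ≤ (Ideal.span (X '' u)).comap (zeroOutside (R := R) s) := by
  rw [Ideal.span_le]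
  rintro _ ⟨i, hi, rfl⟩
  by_cases his : i ∈ s
  · simpa [his] using X_mem_span_X_image (R := R) (h ⟨his, hi⟩)
  · simp [his]

lemma mem_span_X_compl_singleton_of_mul_X_mem [IsDomain R] {z a : σ} (haz : a ≠ z)
    {A : Ideal (MvPolynomial σ R)}
    (hA : A ≤ (Ideal.span {X a * X a}).comap (zeroOutside {z, a}))
    {f : MvPolynomial σ R} (hf : f * X a ∈ A) :
    f ∈ Ideal.span (X '' {z}ᶜ) := by
  have hdvd : X a ∣ zeroOutside {z, a} f := by
    have := Ideal.mem_span_singleton.mp (hA hf)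
    rwa [map_mul, zeroOutside_X_of_mem (by simp), mul_dvd_mul_iff_right (X_ne_zero a)] at this
  rw [← sub_add_cancel f (zeroOutside {z, a} f)]
  refine add_mem ?_ (Ideal.mem_of_dvd _ hdvd (X_mem_span_X_image haz))
  refine Ideal.span_mono (Set.image_mono ?_) (sub_zeroOutside_mem_span_X_compl _ f)
  exact Set.compl_subset_compl.mpr (by simp)

end MvPolynomial

section Sundial

variable {σ R : Type*} [CommRing R] {z a b : σ} {S T : Set σ}

lemma sundial_le_comap_zeroOutside (hzS : z ∉ S) (hbz : b ≠ z) (hzT : z ∉ T) (haT : a ∉ T) :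
    Ideal.span (X '' S) * Ideal.span {X a, X b} + Ideal.span (X '' T)
      ≤ (Ideal.span {X a * X a}).comap
          (zeroOutside (R := R) {z, a}) := by
  have hS : Ideal.span (X '' S) ≤ (Ideal.span {X a}).comap
      (zeroOutside (R := R) {z, a}) := by
    rw [← Set.image_singleton]
    exact span_X_image_le_comap_zeroOutside (by rintro i ⟨rfl | rfl, hi⟩ <;> simp_all)
  have hab : Ideal.span {X a, X b} ≤ (Ideal.span {X a}).comap
      (zeroOutside (R := R) {z, a}) := by
    simpa only [Set.image_pair, Set.image_singleton] using
      span_X_image_le_comap_zeroOutside (t := {a, b}) (u := {a})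
        (by
          rintro i ⟨hza, hab⟩
          simp only [Set.mem_insert_iff, Set.mem_singleton_iff] at hza hab ⊢
          grind)
  have hT : Ideal.span (X '' T) ≤ (Ideal.span {X a * X a}).comap
      (zeroOutside (R := R) {z, a}) := by
    refine (span_X_image_le_comap_zeroOutside (u := ∅) ?_).trans (Ideal.comap_mono ?_)
    · rintro i ⟨rfl | rfl, hi⟩ <;> simp_all
    · simp
  refine sup_le ?_ hT
  rw [← Ideal.span_singleton_mul_span_singleton]
  exact (Ideal.mul_mono hS hab).trans (Ideal.le_comap_mul _)

lemma X_mul_X_mem_sundial (haS : a ∈ S) (hcover : {z}ᶜ ⊆ S ∪ insert b T) {i : σ}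
    (hi : i ≠ z) :
    (X i * X a : MvPolynomial σ R)
      ∈ Ideal.span (X '' S) * Ideal.span {X a, X b} + Ideal.span (X '' T) := by
  obtain hiS | rfl | hiT : i ∈ S ∨ i = b ∨ i ∈ T := hcover hi
  · exact Ideal.mem_sup_left (Ideal.mul_mem_mul (X_mem_span_X_image hiS)
      (Ideal.subset_span (Set.mem_insert _ _)))
  · rw [mul_comm (X i)]
    exact Ideal.mem_sup_left (Ideal.mul_mem_mul (X_mem_span_X_image haS)
      (Ideal.subset_span (Set.mem_insert_of_mem _ (Set.mem_singleton _))))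
  · exact Ideal.mem_sup_right (Ideal.mul_mem_right _ _ (X_mem_span_X_image hiT))

theorem sundial_colon_eq [IsDomain R] (haS : a ∈ S) (hzS : z ∉ S) (hbz : b ≠ z)
    (hzT : z ∉ T) (haT : a ∉ T) (hcover : {z}ᶜ ⊆ S ∪ insert b T) :
    Submodule.colon
      (Ideal.span (X '' S) * Ideal.span {X a, X b} + Ideal.span (X '' T)
        : Ideal (MvPolynomial σ R))
      ↑(Ideal.span {X a} + Ideal.span (X '' T) : Ideal (MvPolynomial σ R))
      = Ideal.span (X '' {z}ᶜ) := by
  apply le_antisymm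
  · intro f hf
    refine mem_span_X_compl_singleton_of_mul_X_mem (ne_of_mem_of_not_mem haS hzS)
      (sundial_le_comap_zeroOutside hzS hbz hzT haT) ?_
    exact Submodule.mem_colon.mp hf _ (Ideal.mem_sup_left (Ideal.mem_span_singleton_self _))
  · rw [Ideal.span_le]
    rintro _ ⟨i, hi, rfl⟩
    rw [SetLike.mem_coe, Submodule.mem_colon]
    intro p hp
    obtain ⟨_, hy, q, hq, rfl⟩ := Submodule.mem_sup.mp hp
    obtain ⟨c, rfl⟩ := Ideal.mem_span_singleton'.mp hy
    rw [smul_eq_mul, mul_add, mul_left_comm]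
    exact add_mem (Ideal.mul_mem_left _ _ (X_mul_X_mem_sundial haS hcover hi))
      (Ideal.mem_sup_right (Ideal.mul_mem_left _ _ hq))

end Sundial

/-- The residual of the `(m+2)`-dimensional sundial with respect to the span `H`
of its line and its `m`-plane is the single reduced point `[1:0:⋯:0]`. -/
theorem stmt6 (k : Type) [Field k] (n m : ℕ) (hn : m + 2 ≤ n) :
    Submodule.colon
      ((Ideal.span (MvPolynomial.X '' {i : Fin (n+1) | 1 ≤ (i : ℕ) ∧ (i : ℕ) ≤ m + 1})
            : Ideal (MvPolynomial (Fin (n+1)) k))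
          * Ideal.span {MvPolynomial.X (⟨m+1, by omega⟩ : Fin (n+1)),
              MvPolynomial.X (⟨m+2, by omega⟩ : Fin (n+1))}
        + Ideal.span (MvPolynomial.X '' {i : Fin (n+1) | m + 3 ≤ (i : ℕ)})
          : Submodule (MvPolynomial (Fin (n+1)) k) (MvPolynomial (Fin (n+1)) k))
      (Ideal.span {MvPolynomial.X (⟨m+1, by omega⟩ : Fin (n+1))}
        + Ideal.span (MvPolynomial.X '' {i : Fin (n+1) | m + 3 ≤ (i : ℕ)})
          : Submodule (MvPolynomial (Fin (n+1)) k) (MvPolynomial (Fin (n+1)) k))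
    = Ideal.span (MvPolynomial.X '' {i : Fin (n+1) | 1 ≤ (i : ℕ)}) := by
  have hpos : {i : Fin (n+1) | 1 ≤ (i : ℕ)} = {0}ᶜ := by
    ext i
    simp only [Set.mem_ofPred_eq, Set.mem_compl_singleton_iff, Nat.one_le_iff_ne_zero, ne_eq,
      Fin.ext_iff, Fin.val_zero]
  rw [hpos]
  refine sundial_colon_eq (by simp) (by simp) (by simp [Fin.ext_iff]) (by simp) (by simp) ?_
  intro i hi
  rw [Set.mem_compl_singleton_iff, ← Fin.val_ne_iff, Fin.val_zero] at hi
  simp only [Set.mem_union, Set.mem_insert_iff, Set.mem_ofPred_eq, Fin.ext_iff]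
  omega
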